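/- arXiv:1912.03847 — 4 statements merged into one kernel-verified Lean document; each statement's English description precedes it below -/
import Mathlib

section
/- Let k ≥ 4 be an even integer and let p be a prime number with p - 1 > 2k - 2. Let N be a positive integer and let χ be a Dirichlet character modulo N with rational values satisfying χ² = 1 (a quadratic character, possibly trivial). Define the generalized Bernoulli number B_{k-1,χ} := N^{k-2} · Σ_{a=0}^{N-1} χ(a) · B_{k-1}(a/N), where B_{k-1}(x) is the (k−1)-st Bernoulli polynomial. Then the rational number B_{k-1,χ}/(k−1) is p-integral, i.e., its denominator in lowest terms is not divisible by p. -/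
namespace CarlitzAux

open Finset

open Finset

/-- `Vp p n q` means the `p`-adic valuation of `q` is at least `n`. -/
def Vp (p n : ℕ) (q : ℚ) : Prop :=
  ∃ z m : ℤ, ¬ (p:ℤ) ∣ m ∧ q * (m:ℚ) = (p:ℚ)^n * (z:ℚ)

variable {p : ℕ}

lemma vp_intCast (hp : p.Prime) {n : ℕ} {z : ℤ} (h : ((p:ℤ))^n ∣ z) :
    Vp p n ((z:ℤ):ℚ) := by
  obtain ⟨w, rfl⟩ := h
  exact ⟨w, 1, (Nat.prime_iff_prime_int.mp hp).not_dvd_one, by push_cast; ring⟩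

lemma vp_zero (hp : p.Prime) (n : ℕ) : Vp p n 0 :=
  ⟨0, 1, (Nat.prime_iff_prime_int.mp hp).not_dvd_one, by simp⟩

lemma vp_add (hp : p.Prime) {n : ℕ} {q r : ℚ} (hq : Vp p n q) (hr : Vp p n r) :
    Vp p n (q + r) := by
  obtain ⟨z1, m1, h1, e1⟩ := hq
  obtain ⟨z2, m2, h2, e2⟩ := hr
  refine ⟨z1 * m2 + z2 * m1, m1 * m2, ?_, ?_⟩
  · intro hd
    rcases (Nat.prime_iff_prime_int.mp hp).dvd_mul.mp hd with h | h
    exacts [h1 h, h2 h]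
  · push_cast
    linear_combination (m2:ℚ) * e1 + (m1:ℚ) * e2

lemma vp_mul (hp : p.Prime) {n j : ℕ} {q r : ℚ} (hq : Vp p n q) (hr : Vp p j r) :
    Vp p (n + j) (q * r) := by
  obtain ⟨z1, m1, h1, e1⟩ := hq
  obtain ⟨z2, m2, h2, e2⟩ := hr
  refine ⟨z1 * z2, m1 * m2, ?_, ?_⟩
  · intro hd
    rcases (Nat.prime_iff_prime_int.mp hp).dvd_mul.mp hd with h | h
    exacts [h1 h, h2 h]
  · push_cast
    rw [pow_add]
    linear_combination (r * (m2:ℚ)) * e1 + ((p:ℚ)^n * (z1:ℚ)) * e2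

lemma vp_sum (hp : p.Prime) {n : ℕ} {α : Type*} (s : Finset α) (f : α → ℚ)
    (h : ∀ a ∈ s, Vp p n (f a)) : Vp p n (∑ a ∈ s, f a) := by
  classical
  induction s using Finset.induction_on with
  | empty => simpa using vp_zero hp n
  | insert _ _ hx ih =>
      rw [Finset.sum_insert hx]
      exact vp_add hp (h _ (Finset.mem_insert_self _ _))
        (ih fun a ha => h a (Finset.mem_insert_of_mem ha))

lemma vp_mono (hp : p.Prime) {n m : ℕ} {q : ℚ} (h : Vp p n q) (hmn : m ≤ n) :
    Vp p m q := by
  obtain ⟨z, mm, h1, e⟩ := h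
  refine ⟨(p:ℤ)^(n - m) * z, mm, h1, ?_⟩
  push_cast
  rw [e, ← mul_assoc, ← pow_add, Nat.add_sub_cancel' hmn]

lemma vp_div_int (hp : p.Prime) {n : ℕ} {q : ℚ} {c : ℤ} (hq : Vp p n q)
    (hc : ¬ (p:ℤ) ∣ c) : Vp p n (q / (c:ℚ)) := by
  obtain ⟨z, m, h1, e⟩ := hq
  have hc0 : (c:ℚ) ≠ 0 := by
    intro h
    exact hc (by simp [show c = 0 from by exact_mod_cast h])
  refine ⟨z, m * c, ?_, ?_⟩
  · intro hd
    rcases (Nat.prime_iff_prime_int.mp hp).dvd_mul.mp hd with h | h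
    exacts [h1 h, hc h]
  · push_cast
    have : q / (c:ℚ) * ((m:ℚ) * (c:ℚ)) = q * (m:ℚ) * ((c:ℚ) / (c:ℚ)) := by ring
    rw [this, div_self hc0, mul_one, e]

lemma vp_cancel (hp : p.Prime) {n : ℕ} {q : ℚ} (h : Vp p (n + 1) ((p:ℚ) * q)) :
    Vp p n q := by
  obtain ⟨z, m, h1, e⟩ := h
  have hp0 : (p:ℚ) ≠ 0 := by exact_mod_cast hp.ne_zero
  refine ⟨z, m, h1, ?_⟩
  have : (p:ℚ) * (q * (m:ℚ)) = (p:ℚ) * ((p:ℚ)^n * (z:ℚ)) := by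
    rw [pow_succ] at e
    linear_combination e
  exact mul_left_cancel₀ hp0 this

lemma vp_den (hp : p.Prime) {q : ℚ} (h : Vp p 0 q) : ¬ p ∣ q.den := by
  obtain ⟨z, m, h1, e⟩ := h
  rw [pow_zero, one_mul] at e
  have hm0 : (m:ℚ) ≠ 0 := by
    intro hm
    exact h1 (by simp [show m = 0 from by exact_mod_cast hm])
  have hq : q = (z:ℚ) / (m:ℚ) := by field_simp; linear_combination e
  have : (q.den : ℤ) ∣ m := by
    rw [hq, ← Rat.divInt_eq_div]
    exact Rat.den_dvd z m
  intro hd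
  exact h1 (dvd_trans (Int.natCast_dvd_natCast.mpr hd) this)

lemma vp_int_dvd (hp : p.Prime) {n : ℕ} {z : ℤ} (h : Vp p n ((z:ℤ):ℚ)) :
    ((p:ℤ))^n ∣ z := by
  obtain ⟨w, m, h1, e⟩ := h
  have e' : z * m = (p:ℤ)^n * w := by exact_mod_cast e
  have hcop : IsCoprime ((p:ℤ)^n) m :=
    ((Nat.prime_iff_prime_int.mp hp).coprime_iff_not_dvd.mpr h1).pow_left
  exact hcop.dvd_of_dvd_mul_right ⟨w, by linarith [e']⟩

open Finset


lemma vp_neg {n : ℕ} {q : ℚ} (h : Vp p n q) : Vp p n (-q) := by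
  obtain ⟨z, m, h1, e⟩ := h
  exact ⟨-z, m, h1, by push_cast; linear_combination -e⟩

lemma not_dvd_of_lt (hp : p.Prime) {c : ℕ} (h0 : 0 < c) (h : c < p) :
    ¬ (p:ℤ) ∣ ((c:ℕ):ℤ) := by
  rw [Int.natCast_dvd_natCast]
  intro hd
  exact absurd (Nat.le_of_dvd h0 hd) (by omega)

/-- sum over `range N` equals sum over `ZMod N` (via `val`). -/
lemma sum_range_eq_sum_zmod {M : Type*} [AddCommMonoid M] (N : ℕ) [NeZero N]
    (f : ℕ → M) : ∑ a ∈ range N, f a = ∑ x : ZMod N, f x.val := by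
  refine Finset.sum_nbij' (fun a => (a : ZMod N)) (fun x => x.val) ?_ ?_ ?_ ?_ ?_
  · intro a _; exact Finset.mem_univ _
  · intro x _; exact Finset.mem_range.mpr (ZMod.val_lt x)
  · intro a ha
    exact ZMod.val_natCast_of_lt (Finset.mem_range.mp ha)
  · intro x _
    exact ZMod.natCast_rightInverse x
  · intro a ha
    rw [ZMod.val_natCast_of_lt (Finset.mem_range.mp ha)]

lemma dvd_sum_pow (hp : p.Prime) {i : ℕ} (hi : 0 < i) (hilt : i < p - 1) :
    (p:ℤ) ∣ ∑ a ∈ range p, ((a:ℤ))^i := by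
  haveI : Fact p.Prime := ⟨hp⟩
  rw [← ZMod.intCast_zmod_eq_zero_iff_dvd]
  push_cast
  rw [sum_range_eq_sum_zmod p (fun a => ((a : ZMod p))^i)]
  have : ∀ x : ZMod p, ((x.val : ZMod p))^i = x^i := by
    intro x; rw [ZMod.natCast_rightInverse x]
  rw [Finset.sum_congr rfl fun x _ => this x]
  have hcard : Fintype.card (ZMod p) = p := ZMod.card p
  exact FiniteField.sum_pow_lt_card_sub_one (ZMod p) i (by omega)

lemma bern_identity (i : ℕ) (hi : i + 1 < p) :
    (p:ℚ) * _root_.bernoulli i = (∑ a ∈ range p, (a:ℚ)^i) -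
      ∑ j ∈ range i, _root_.bernoulli j * ((i+1).choose j) * (p:ℚ)^(i+1-j) / ((i:ℚ)+1) := by
  have h := sum_range_pow p i
  rw [Finset.sum_range_succ] at h
  have hne : ((i:ℚ)+1) ≠ 0 := by positivity
  have hlast : _root_.bernoulli i * ((i+1).choose i) * (p:ℚ)^(i+1-i) / ((i:ℚ)+1)
      = (p:ℚ) * _root_.bernoulli i := by
    rw [Nat.choose_succ_self_right, Nat.add_sub_cancel_left, pow_one]
    push_cast
    field_simp
  rw [h]
  linear_combination -hlast

lemma vp_p_mul_bernoulli (hp : p.Prime) :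
    ∀ i, i < p - 1 → Vp p 0 ((p:ℚ) * _root_.bernoulli i) := by
  intro i
  induction i using Nat.strong_induction_on with
  | _ i IH =>
    intro hi
    have hp2 := hp.two_le
    have hi1 : i + 1 < p := by omega
    rw [bern_identity i hi1, sub_eq_add_neg]
    apply vp_add hp
    · have : (∑ a ∈ range p, (a:ℚ)^i) = (((∑ a ∈ range p, (a:ℤ)^i : ℤ)):ℚ) := by
        push_cast; rfl
      rw [this]
      exact vp_intCast hp (by simp)
    · apply vp_neg
      apply vp_sum hp
      intro j hj
      have hj' : j < i := Finset.mem_range.mp hj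
      have hterm : _root_.bernoulli j * ((i+1).choose j) * (p:ℚ)^(i+1-j) / ((i:ℚ)+1)
          = ((p:ℚ) * _root_.bernoulli j) *
            (((((i+1).choose j) * p^(i-j) : ℕ):ℤ):ℚ) / (((i+1 : ℕ):ℤ):ℚ) := by
        push_cast
        rw [show i+1-j = (i-j)+1 from by omega, pow_succ]
        ring
      rw [hterm]
      have h0 : Vp p (0+0) (((p:ℚ) * _root_.bernoulli j) *
          (((((i+1).choose j) * p^(i-j) : ℕ):ℤ):ℚ)) :=
        vp_mul hp (IH j hj' (by omega)) (vp_intCast hp (by simp))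
      exact vp_div_int hp h0 (not_dvd_of_lt hp (by omega) (by omega))

lemma vp_bernoulli (hp : p.Prime) {i : ℕ} (h0 : 0 < i) (hi : i < p - 1) :
    Vp p 0 (_root_.bernoulli i) := by
  apply vp_cancel hp (n := 0)
  have hp2 := hp.two_le
  have hi1 : i + 1 < p := by omega
  rw [bern_identity i hi1, sub_eq_add_neg]
  apply vp_add hp
  · have : (∑ a ∈ range p, (a:ℚ)^i) = (((∑ a ∈ range p, (a:ℤ)^i : ℤ)):ℚ) := by
      push_cast; rfl
    rw [this]
    exact vp_intCast hp (by rw [pow_one]; exact dvd_sum_pow hp h0 hi)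
  · apply vp_neg
    apply vp_sum hp
    intro j hj
    have hj' : j < i := Finset.mem_range.mp hj
    have hterm : _root_.bernoulli j * ((i+1).choose j) * (p:ℚ)^(i+1-j) / ((i:ℚ)+1)
        = ((p:ℚ) * _root_.bernoulli j) *
          (((((i+1).choose j) * p^(i-j) : ℕ):ℤ):ℚ) / (((i+1 : ℕ):ℤ):ℚ) := by
      push_cast
      rw [show i+1-j = (i-j)+1 from by omega, pow_succ]
      ring
    rw [hterm]
    have h0' : Vp p (0+1) (((p:ℚ) * _root_.bernoulli j) *
        (((((i+1).choose j) * p^(i-j) : ℕ):ℤ):ℚ)) := by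
      apply vp_mul hp (vp_p_mul_bernoulli hp j (by omega))
      apply vp_intCast hp
      rw [pow_one]
      push_cast
      exact dvd_mul_of_dvd_right (dvd_pow_self (p:ℤ) (by omega)) _
    exact vp_div_int hp h0' (not_dvd_of_lt hp (by omega) (by omega))

open Finset

lemma sum_range_eq_sum_zmod' {M : Type*} [AddCommMonoid M] (N : ℕ) [NeZero N]
    (f : ℕ → M) : ∑ a ∈ range N, f a = ∑ x : ZMod N, f x.val := by
  refine Finset.sum_nbij' (fun a => (a : ZMod N)) (fun x => x.val) ?_ ?_ ?_ ?_ ?_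
  · intro a _; exact Finset.mem_univ _
  · intro x _; exact Finset.mem_range.mpr (ZMod.val_lt x)
  · intro a ha; exact ZMod.val_natCast_of_lt (Finset.mem_range.mp ha)
  · intro x _; exact ZMod.natCast_rightInverse x
  · intro a ha; rw [ZMod.val_natCast_of_lt (Finset.mem_range.mp ha)]

lemma char_sum_dvd (hp : p.Prime) {k N : ℕ} (hk : 4 ≤ k) (hgt : 2*k - 2 < p - 1)
    (hN : 0 < N) (χ : DirichletCharacter ℚ N) (hχ : χ ^ 2 = 1)
    (ψ : ZMod N → ℤ) (hψ : ∀ x, ((ψ x : ℤ):ℚ) = χ x) :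
    ((p:ℤ))^(N.factorization p) ∣ ∑ a ∈ range N, ψ (a : ZMod N) * ((a:ℤ))^(k-1) := by
  haveI : NeZero N := ⟨hN.ne'⟩
  set e := N.factorization p with he_def
  by_cases he : e = 0
  · simp [he]
  have hpN : p ∣ N := dvd_trans (dvd_pow_self p he) (Nat.ordProj_dvd N p)
  haveI : Fact p.Prime := ⟨hp⟩
  have hp2 := hp.two_le
  -- ψ is multiplicative
  have hψmul : ∀ x y : ZMod N, ψ (x*y) = ψ x * ψ y := by
    intro x y
    have : ((ψ (x*y) : ℤ):ℚ) = ((ψ x * ψ y : ℤ):ℚ) := by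
      push_cast
      rw [hψ, hψ, hψ, map_mul]
    exact_mod_cast this
  -- a unit mapping to a generator mod p
  obtain ⟨g, hg⟩ := IsCyclic.exists_generator (α := (ZMod p)ˣ)
  obtain ⟨u, hu⟩ := ZMod.unitsMap_surjective hpN g
  have horder : orderOf g = p - 1 := by
    rw [orderOf_eq_card_of_forall_mem_zpowers hg, Nat.card_eq_fintype_card, ZMod.card_units_eq_totient,
      Nat.totient_prime hp]
  -- ψ at u is ±1
  have hunit : IsUnit ((u : (ZMod N)ˣ) : ZMod N) := u.isUnit
  have hval : χ ((u : (ZMod N)ˣ) : ZMod N) = 1 ∨ χ ((u : (ZMod N)ˣ) : ZMod N) = -1 := by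
    apply mul_self_eq_one_iff.mp
    rw [← sq, ← MulChar.pow_apply' χ two_ne_zero, hχ, MulChar.one_apply hunit]
  have hψu : ψ ((u : (ZMod N)ˣ) : ZMod N) = 1 ∨ ψ ((u : (ZMod N)ˣ) : ZMod N) = -1 := by
    rcases hval with h | h
    · left; exact_mod_cast (hψ _).trans h
    · right; exact_mod_cast (hψ _).trans h
  set w : ℕ := ((u : (ZMod N)ˣ) : ZMod N).val with hw_def
  set c : ℤ := ψ ((u : (ZMod N)ˣ) : ZMod N) * (w:ℤ)^(k-1) - 1 with hc_def
  -- w reduces to g mod p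
  have hgp : ((w:ℕ) : ZMod p) = (g : ZMod p) := by
    rw [hw_def, ZMod.natCast_val, ← hu]
    rfl
  -- powers of g
  have hk1pos : 0 < k - 1 := by omega
  have hgk1 : ((g : ZMod p))^(k-1) ≠ 1 := by
    intro h
    have : g^(k-1) = 1 := Units.ext (by push_cast [Units.val_pow_eq_pow_val]; exact h)
    have hd := orderOf_dvd_of_pow_eq_one this
    rw [horder] at hd
    have := Nat.le_of_dvd hk1pos hd
    omega
  have hgk2 : ((g : ZMod p))^(k-1) ≠ -1 := by
    intro h
    have h2 : ((g : ZMod p))^(2*(k-1)) = 1 := by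
      rw [two_mul, pow_add, h]
      ring
    have : g^(2*(k-1)) = 1 := Units.ext (by push_cast [Units.val_pow_eq_pow_val]; exact h2)
    have hd := orderOf_dvd_of_pow_eq_one this
    rw [horder] at hd
    have := Nat.le_of_dvd (by omega) hd
    omega
  -- p does not divide c
  have hc : ¬ (p:ℤ) ∣ c := by
    intro hd
    have h0 : ((c : ℤ) : ZMod p) = 0 := (ZMod.intCast_zmod_eq_zero_iff_dvd c p).mpr hd
    rcases hψu with h1 | h1 <;> rw [hc_def, h1] at h0 <;> push_cast at h0 <;>
      rw [hgp] at h0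
    · exact hgk1 (by linear_combination h0)
    · exact hgk2 (by linear_combination -h0)
  -- the sum, in ZMod-indexed form
  set T : ℤ := ∑ a ∈ range N, ψ (a : ZMod N) * ((a:ℤ))^(k-1) with hT_def
  have hT1 : T = ∑ x : ZMod N, ψ x * ((x.val : ℕ):ℤ)^(k-1) := by
    rw [hT_def, sum_range_eq_sum_zmod' N (fun a => ψ (a : ZMod N) * ((a:ℤ))^(k-1))]
    exact Finset.sum_congr rfl fun x _ => by rw [ZMod.natCast_rightInverse x]
  have hbij : Function.Bijective
      (fun x : ZMod N => ((u : (ZMod N)ˣ) : ZMod N) * x) := by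
    constructor
    · intro a b h
      have := congrArg (fun t => ((u⁻¹ : (ZMod N)ˣ) : ZMod N) * t) h
      simpa [← mul_assoc, Units.inv_mul] using this
    · intro y
      exact ⟨((u⁻¹ : (ZMod N)ˣ) : ZMod N) * y, by simp [← mul_assoc]⟩
  have hT2 : T = ∑ x : ZMod N,
      ψ (((u : (ZMod N)ˣ) : ZMod N) * x) *
        (((((u : (ZMod N)ˣ) : ZMod N) * x).val : ℕ):ℤ)^(k-1) := by
    rw [hT1]
    exact (Fintype.sum_bijective _ hbij _ _ (fun x => rfl)).symm
  -- now compute in ZMod (p^e)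
  have hm : (p^e : ℕ) ∣ N := Nat.ordProj_dvd N p
  set R := ZMod (p^e)
  set φ : ZMod N →+* R := ZMod.castHom hm R with hφ_def
  have hvalcast : ∀ x : ZMod N, ((x.val : ℕ) : R) = φ x := by
    intro x
    rw [ZMod.natCast_val, ZMod.castHom_apply]
  have step1 : ((T : ℤ) : R) = ∑ x : ZMod N, ((ψ x : ℤ) : R) * (φ x)^(k-1) := by
    rw [hT1]
    push_cast [R]
    exact Finset.sum_congr rfl fun x _ => by rw [hvalcast]
  have step2 : ((T : ℤ) : R) =
      ((ψ ((u : (ZMod N)ˣ) : ZMod N) : ℤ) : R) * (φ ((u : (ZMod N)ˣ) : ZMod N))^(k-1) *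
        ((T : ℤ) : R) := by
    conv_lhs => rw [hT2]
    push_cast [R]
    rw [step1, Finset.mul_sum]
    refine Finset.sum_congr rfl fun x _ => ?_
    rw [hvalcast, hψmul, map_mul]
    push_cast [R]
    ring
  have hcT : ((c * T : ℤ) : R) = 0 := by
    push_cast [R]
    rw [hc_def]
    push_cast [R]
    rw [show ((w:ℕ):R) = φ ((u : (ZMod N)ˣ) : ZMod N) from hvalcast _]
    linear_combination -step2
  have hdvd : ((p:ℤ))^e ∣ c * T := by
    have := (ZMod.intCast_zmod_eq_zero_iff_dvd (c*T) (p^e)).mp hcT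
    push_cast at this
    exact this
  have hcop : IsCoprime (((p:ℤ))^e) c :=
    ((Nat.prime_iff_prime_int.mp hp).coprime_iff_not_dvd.mpr hc).pow_left
  exact hcop.dvd_of_dvd_mul_left hdvd

end CarlitzAux


open CarlitzAux Finset in
/-- Carlitz's theorem as used in the paper: for `k ≥ 4` even, `p` prime with
`p - 1 > 2k - 2`, `N` a positive integer and `χ` a quadratic Dirichlet
character mod `N` with rational values, the generalized Bernoulli number
`B_{k-1,χ} = N^{k-2} ∑_{a=0}^{N-1} χ(a) B_{k-1}(a/N)` divided by `k - 1`
is `p`-integral. -/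
theorem generalized_bernoulli_p_integral (k : ℕ) (hk : 4 ≤ k) (hke : Even k)
    (p : ℕ) (hp : p.Prime) (hgt : 2 * k - 2 < p - 1)
    (N : ℕ) (hN : 0 < N) (χ : DirichletCharacter ℚ N) (hχ : χ ^ 2 = 1) :
    ¬ p ∣ (((N : ℚ) ^ (k - 2) *
        ∑ a ∈ Finset.range N,
          χ (a : ZMod N) * (Polynomial.bernoulli (k - 1)).eval ((a : ℚ) / (N : ℚ))) /
        ((k - 1 : ℕ) : ℚ)).den := by
  classical
  have hp2 := hp.two_le
  haveI : NeZero N := ⟨hN.ne'⟩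
  have hNQ : (N:ℚ) ≠ 0 := Nat.cast_ne_zero.mpr hN.ne'
  have hkQ : ((k-1 : ℕ):ℚ) ≠ 0 := Nat.cast_ne_zero.mpr (by omega)
  -- the integer-valued version of χ
  set ψ : ZMod N → ℤ := fun x => if χ x = 1 then 1 else if χ x = -1 then -1 else 0 with hψ_def
  have hψ : ∀ x : ZMod N, ((ψ x : ℤ):ℚ) = χ x := by
    intro x
    by_cases hu : IsUnit x
    · have h2 : χ x * χ x = 1 := by
        rw [← sq, ← MulChar.pow_apply' χ two_ne_zero, hχ, MulChar.one_apply hu]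
      rcases mul_self_eq_one_iff.mp h2 with h | h
      · rw [hψ_def]; simp only [h, if_pos rfl]; norm_num
      · rw [hψ_def]; simp only [h]; norm_num
    · rw [hψ_def]; simp only [MulChar.map_nonunit χ hu]; norm_num
  -- integer character sums
  set Tm : ℕ → ℤ := fun m => ∑ a ∈ range N, ψ (a : ZMod N) * ((a:ℤ))^m with hTm_def
  have hSm : ∀ m : ℕ, ∑ a ∈ range N, χ (a : ZMod N) * ((a:ℚ))^m = ((Tm m : ℤ):ℚ) := by
    intro m
    rw [hTm_def]
    push_cast
    exact Finset.sum_congr rfl fun a _ => by rw [hψ]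
  -- p-part of N
  set e := N.factorization p with he_def
  set M := N / p^e with hM_def
  have hNfact : p^e * M = N := Nat.ordProj_mul_ordCompl_eq_self N p
  have hMnd : ¬ p ∣ M := Nat.not_dvd_ordCompl hp hN.ne'
  have hM0 : 0 < M := Nat.ordCompl_pos p hN.ne'
  obtain ⟨T', hT'⟩ := char_sum_dvd hp hk hgt hN χ hχ ψ hψ
  -- expand the Bernoulli polynomial
  have heval : ∀ x : ℚ, (Polynomial.bernoulli (k-1)).eval x
      = ∑ i ∈ range k, _root_.bernoulli i * ((k-1).choose i) * x^(k-1-i) := by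
    intro x
    rw [Polynomial.bernoulli, Polynomial.eval_finset_sum,
      show (k-1)+1 = k from by omega]
    exact Finset.sum_congr rfl fun i _ => by rw [Polynomial.eval_monomial]
  -- rewrite the expression as a sum over i
  have key : ((N : ℚ) ^ (k - 2) *
        ∑ a ∈ Finset.range N,
          χ (a : ZMod N) * (Polynomial.bernoulli (k - 1)).eval ((a : ℚ) / (N : ℚ))) /
        ((k - 1 : ℕ) : ℚ)
      = ∑ i ∈ range k, _root_.bernoulli i *
          (((k-1).choose i : ℚ) * ((N:ℚ)^(k-2) * ((Tm (k-1-i) : ℤ):ℚ)) /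
            ((N:ℚ)^(k-1-i) * ((k-1:ℕ):ℚ))) := by
    have h1 : ∑ a ∈ Finset.range N,
          χ (a : ZMod N) * (Polynomial.bernoulli (k - 1)).eval ((a : ℚ) / (N : ℚ))
        = ∑ a ∈ range N, ∑ i ∈ range k,
            χ (a : ZMod N) * (_root_.bernoulli i * ((k-1).choose i) *
              (((a:ℚ))^(k-1-i) / (N:ℚ)^(k-1-i))) := by
      refine Finset.sum_congr rfl fun a _ => ?_
      rw [heval, Finset.mul_sum]
      exact Finset.sum_congr rfl fun i _ => by rw [div_pow]
    rw [h1, Finset.sum_comm]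
    rw [Finset.mul_sum, Finset.sum_div]
    refine Finset.sum_congr rfl fun i _ => ?_
    have hNpow : (N:ℚ)^(k-1-i) ≠ 0 := pow_ne_zero _ hNQ
    have hinner : ∑ x ∈ Finset.range N, χ (x:ZMod N) *
          (_root_.bernoulli i * ((k-1).choose i) * ((x:ℚ)^(k-1-i) / (N:ℚ)^(k-1-i)))
        = (_root_.bernoulli i * ((k-1).choose i) / (N:ℚ)^(k-1-i)) * ((Tm (k-1-i) : ℤ):ℚ) := by
      rw [← hSm, Finset.mul_sum]
      exact Finset.sum_congr rfl fun x _ => by ring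
    rw [hinner]
    field_simp
  rw [key]
  apply vp_den hp
  apply vp_sum hp
  intro i hi
  have hik : i ≤ k - 1 := by have := Finset.mem_range.mp hi; omega
  have hkp : k - 1 < p - 1 := by omega
  by_cases hi0 : i = 0
  · -- the i = 0 term
    subst hi0
    have hNQfact : (N:ℚ) = (p:ℚ)^e * (M:ℚ) := by
      rw [← hNfact]; push_cast; ring
    have hterm : _root_.bernoulli 0 *
          ((((k-1).choose 0 : ℚ)) * ((N:ℚ)^(k-2) * ((Tm (k-1-0) : ℤ):ℚ)) /
            ((N:ℚ)^(k-1-0) * ((k-1:ℕ):ℚ)))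
        = ((T' * (M:ℤ)^(k-2) : ℤ):ℚ) / (((M:ℤ)^(k-1) * ((k-1:ℕ):ℤ) : ℤ):ℚ) := by
      rw [bernoulli_zero, Nat.choose_zero_right, Nat.sub_zero]
      rw [show Tm (k-1) = (p:ℤ)^e * T' from by simp only [hTm_def]; rw [he_def]; exact hT']
      have hMQ : (M:ℚ) ≠ 0 := Nat.cast_ne_zero.mpr hM0.ne'
      have h2 : (((p:ℤ)^e * T' : ℤ):ℚ) = (p:ℚ)^e * ((T':ℤ):ℚ) := by push_cast; ring
      have h3 : ((T' * (M:ℤ)^(k-2) : ℤ):ℚ) = ((T':ℤ):ℚ) * (M:ℚ)^(k-2) := by push_cast; ring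
      have h4 : (((M:ℤ)^(k-1) * ((k-1:ℕ):ℤ) : ℤ):ℚ) = (M:ℚ)^(k-1) * (((k-1):ℕ):ℚ) := by
        push_cast; ring
      rw [h2, h3, h4, one_mul, Nat.cast_one, one_mul]
      have hD1 : (N:ℚ)^(k-1) * (((k-1):ℕ):ℚ) ≠ 0 := mul_ne_zero (pow_ne_zero _ hNQ) hkQ
      have hD2 : (M:ℚ)^(k-1) * (((k-1):ℕ):ℚ) ≠ 0 := mul_ne_zero (pow_ne_zero _ hMQ) hkQ
      rw [div_eq_div_iff hD1 hD2, hNQfact, show k - 1 = (k-2)+1 from by omega]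
      ring
    rw [hterm]
    apply vp_div_int hp (vp_intCast hp (by simp))
    intro hd
    rcases (Nat.prime_iff_prime_int.mp hp).dvd_mul.mp hd with h | h
    · exact hMnd (Int.natCast_dvd_natCast.mp ((Nat.prime_iff_prime_int.mp hp).dvd_of_dvd_pow h))
    · exact not_dvd_of_lt hp (show 0 < k-1 by omega) (by omega) h
  · -- the terms with i ≥ 1
    have hterm : _root_.bernoulli i *
          ((((k-1).choose i : ℚ)) * ((N:ℚ)^(k-2) * ((Tm (k-1-i) : ℤ):ℚ)) /
            ((N:ℚ)^(k-1-i) * ((k-1:ℕ):ℚ)))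
        = _root_.bernoulli i *
            (((((k-1).choose i : ℤ) * (N:ℤ)^(i-1) * Tm (k-1-i) : ℤ):ℚ) / (((k-1:ℕ):ℤ):ℚ)) := by
      have hNpow : (N:ℚ)^(k-1-i) ≠ 0 := pow_ne_zero _ hNQ
      have h2 : ((((k-1).choose i : ℤ) * (N:ℤ)^(i-1) * Tm (k-1-i) : ℤ):ℚ)
          = (((k-1).choose i : ℕ):ℚ) * (N:ℚ)^(i-1) * ((Tm (k-1-i) : ℤ):ℚ) := by
        push_cast; ring
      have h3 : ((((k-1):ℕ):ℤ):ℚ) = (((k-1):ℕ):ℚ) := by push_cast; ring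
      rw [h2, h3]
      congr 1
      rw [div_eq_div_iff (mul_ne_zero hNpow hkQ) hkQ]
      rw [show (N:ℚ)^(k-2) = (N:ℚ)^(i-1) * (N:ℚ)^(k-1-i) from by
        rw [← pow_add]; congr 1; omega]
      ring
    rw [hterm]
    have h0 : Vp p (0+0) (_root_.bernoulli i *
        (((((k-1).choose i : ℤ) * (N:ℤ)^(i-1) * Tm (k-1-i) : ℤ):ℚ) / (((k-1:ℕ):ℤ):ℚ))) := by
      apply vp_mul hp (vp_bernoulli hp (by omega) (by omega))
      exact vp_div_int hp (vp_intCast hp (by simp))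
        (not_dvd_of_lt hp (show 0 < k-1 by omega) (by omega))
    exact h0
end

section
/- Let O be a discrete valuation ring with maximal ideal m and residue field F = O/m, let G be a group, and let ρ : G → GL_4(O) be a group homomorphism. Denote by ρ̄ : G → GL_4(F) the reduction of ρ modulo m, and regard F^4 as an F[G]-module via ρ̄. If every composition factor (Jordan–Hölder factor) of this F[G]-module is one-dimensional over F, then there exists P ∈ GL_4(O) such that for every σ ∈ G the reduction modulo m of P·ρ(σ)·P^{-1} is an upper triangular matrix in GL_4(F). -/
open Matrix


private theorem aux_upper_tri {K : Type*} [Field K] {G : Type*}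
    (M : G → Matrix (Fin 4) (Fin 4) K)
    (hcf : ∀ W W' : Submodule K (Fin 4 → K),
      (∀ σ : G, ∀ v ∈ W, (M σ).mulVec v ∈ W) →
      (∀ σ : G, ∀ v ∈ W', (M σ).mulVec v ∈ W') →
      W < W' →
      (∀ X : Submodule K (Fin 4 → K),
        (∀ σ : G, ∀ v ∈ X, (M σ).mulVec v ∈ X) → W ≤ X → X ≤ W' →
          X = W ∨ X = W') →
      Module.finrank K W' = Module.finrank K W + 1) :
    ∃ B : Matrix (Fin 4) (Fin 4) K, IsUnit B.det ∧
      ∀ σ : G, ∀ i j : Fin 4, j < i → (B⁻¹ * M σ * B) i j = 0 := by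
  classical
  have hdimV : Module.finrank K (Fin 4 → K) = 4 := by
    rw [Module.finrank_pi]; simp
  set stab : Submodule K (Fin 4 → K) → Prop :=
    fun W => ∀ σ : G, ∀ v ∈ W, (M σ).mulVec v ∈ W with hstabdef
  have step : ∀ W : Submodule K (Fin 4 → K), stab W → Module.finrank K W < 4 →
      ∃ W', stab W' ∧ W < W' ∧
        Module.finrank K W' = Module.finrank K W + 1 := by
    intro W hW hdim
    have hWtop : W < ⊤ := by
      rcases lt_or_eq_of_le (le_top : W ≤ ⊤) with h | h
      · exact h
      · exfalso; rw [h, finrank_top, hdimV] at hdim; omega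
    have hsne : Set.Nonempty
        {n | ∃ X : Submodule K (Fin 4 → K), stab X ∧ W < X ∧ Module.finrank K X = n} :=
      ⟨_, ⊤, fun σ v _ => Submodule.mem_top, hWtop, rfl⟩
    obtain ⟨X, hXs, hWX, hXrank⟩ := Nat.sInf_mem hsne
    have hcov : ∀ Y : Submodule K (Fin 4 → K), stab Y → W ≤ Y → Y ≤ X → Y = W ∨ Y = X := by
      intro Y hY hWY hYX
      rcases eq_or_lt_of_le hWY with h | h
      · exact Or.inl h.symm
      · refine Or.inr (Submodule.eq_of_le_of_finrank_le hYX ?_)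
        rw [hXrank]
        exact Nat.sInf_le ⟨Y, hY, h, rfl⟩
    exact ⟨X, hXs, hWX, hcf W X hW hXs hWX hcov⟩
  have hbot : stab ⊥ := by
    intro σ v hv
    rw [Submodule.mem_bot] at hv ⊢
    rw [hv, Matrix.mulVec_zero]
  have hrbot : Module.finrank K (⊥ : Submodule K (Fin 4 → K)) = 0 := finrank_bot K _
  obtain ⟨W1, hW1, hlt1, hr1⟩ := step ⊥ hbot (by rw [hrbot]; omega)
  rw [hrbot] at hr1
  obtain ⟨W2, hW2, hlt2, hr2⟩ := step W1 hW1 (by omega)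
  rw [hr1] at hr2
  obtain ⟨W3, hW3, hlt3, hr3⟩ := step W2 hW2 (by omega)
  rw [hr2] at hr3
  have hlt4 : W3 < ⊤ := by
    rcases lt_or_eq_of_le (le_top : W3 ≤ ⊤) with h | h
    · exact h
    · exfalso
      have := finrank_top K (Fin 4 → K)
      rw [← h, hr3, hdimV] at this; omega
  obtain ⟨v0, hv0W, hv0⟩ := SetLike.exists_of_lt hlt1
  obtain ⟨v1, hv1W, hv1⟩ := SetLike.exists_of_lt hlt2
  obtain ⟨v2, hv2W, hv2⟩ := SetLike.exists_of_lt hlt3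
  obtain ⟨v3, hv3W, hv3⟩ := SetLike.exists_of_lt hlt4
  have grow : ∀ (A B : Submodule K (Fin 4 → K)) (x : Fin 4 → K) (S : Set (Fin 4 → K)),
      Submodule.span K S = A →
      x ∈ B → x ∉ A → A ≤ B →
      Module.finrank K B = Module.finrank K A + 1 →
      Submodule.span K (insert x S) = B := by
    intro A B x S hS hxB hxA hAB hr
    have h1 : Submodule.span K (insert x S) = Submodule.span K {x} ⊔ A := by
      rw [Submodule.span_insert, hS]
    have h2 : Submodule.span K {x} ⊔ A ≤ B :=
      sup_le ((Submodule.span_singleton_le_iff_mem x B).2 hxB) hAB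
    have h3 : A < Submodule.span K {x} ⊔ A := by
      refine lt_of_le_of_ne le_sup_right fun h => hxA ?_
      rw [h]
      exact Submodule.mem_sup_left (Submodule.mem_span_singleton_self x)
    have h4 := Submodule.finrank_lt_finrank_of_lt h3
    rw [h1]
    exact Submodule.eq_of_le_of_finrank_le h2 (by omega)
  have hs1 : Submodule.span K ({v0} : Set (Fin 4 → K)) = W1 := by
    have := grow ⊥ W1 v0 ∅ (Submodule.span_empty) hv0W
      (by simpa using hv0) bot_le (by rw [hr1, hrbot])
    simpa using this
  have hs2 : Submodule.span K (insert v1 {v0} : Set (Fin 4 → K)) = W2 :=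
    grow W1 W2 v1 {v0} hs1 hv1W hv1 hlt2.le (by rw [hr2, hr1])
  have hs3 : Submodule.span K (insert v2 (insert v1 {v0}) : Set (Fin 4 → K)) = W3 :=
    grow W2 W3 v2 _ hs2 hv2W hv2 hlt3.le (by rw [hr3, hr2])
  have hs4 : Submodule.span K (insert v3 (insert v2 (insert v1 {v0})) : Set (Fin 4 → K)) = ⊤ :=
    grow W3 ⊤ v3 _ hs3 Submodule.mem_top hv3 le_top (by rw [finrank_top, hdimV, hr3])
  set v : Fin 4 → (Fin 4 → K) := ![v0, v1, v2, v3] with hvdef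
  have hrange : Set.range v = insert v3 (insert v2 (insert v1 {v0})) := by
    ext x
    constructor
    · rintro ⟨i, rfl⟩
      fin_cases i <;> simp [hvdef]
    · rintro (rfl | rfl | rfl | rfl)
      exacts [⟨3, rfl⟩, ⟨2, rfl⟩, ⟨1, rfl⟩, ⟨0, rfl⟩]
  have hspan : ⊤ ≤ Submodule.span K (Set.range v) := by rw [hrange, hs4]
  have hcard : Fintype.card (Fin 4) = Module.finrank K (Fin 4 → K) := by rw [hdimV]; simp
  set b := basisOfTopLeSpanOfCardEqFinrank v hspan hcard with hbdef
  have hb : ⇑b = v := coe_basisOfTopLeSpanOfCardEqFinrank v hspan hcard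
  have hmem : ∀ σ : G, ∀ j : Fin 4,
      (M σ).mulVec (v j) ∈ Submodule.span K (v '' Set.Iic j) := by
    intro σ j
    fin_cases j
    · show (M σ).mulVec (v 0) ∈ Submodule.span K (v '' Set.Iic 0)
      have h1 : (Set.Iic (0 : Fin 4)) = {0} := by
        ext i; simp [Fin.le_zero_iff]
      rw [h1, Set.image_singleton, show v 0 = v0 from rfl, hs1]
      exact hW1 σ v0 hv0W
    · show (M σ).mulVec (v 1) ∈ Submodule.span K (v '' Set.Iic 1)
      have h1 : (Set.Iic (1 : Fin 4)) = {1, 0} := by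
        ext i
        simp only [Set.mem_Iic, Set.mem_insert_iff, Set.mem_singleton_iff, Fin.ext_iff,
          Fin.le_def]
        omega
      rw [h1, Set.image_insert_eq, Set.image_singleton,
        show v 1 = v1 from rfl, show v 0 = v0 from rfl, hs2]
      exact hW2 σ v1 hv1W
    · show (M σ).mulVec (v 2) ∈ Submodule.span K (v '' Set.Iic 2)
      have h1 : (Set.Iic (2 : Fin 4)) = {2, 1, 0} := by
        ext i
        simp only [Set.mem_Iic, Set.mem_insert_iff, Set.mem_singleton_iff, Fin.ext_iff,
          Fin.le_def]
        omega
      rw [h1, Set.image_insert_eq, Set.image_insert_eq, Set.image_singleton,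
        show v 2 = v2 from rfl, show v 1 = v1 from rfl, show v 0 = v0 from rfl, hs3]
      exact hW3 σ v2 hv2W
    · show (M σ).mulVec (v 3) ∈ Submodule.span K (v '' Set.Iic 3)
      have h1 : (Set.Iic (3 : Fin 4)) = {3, 2, 1, 0} := by
        ext i
        simp only [Set.mem_Iic, Set.mem_insert_iff, Set.mem_singleton_iff, Fin.ext_iff,
          Fin.le_def]
        omega
      rw [h1, Set.image_insert_eq, Set.image_insert_eq, Set.image_insert_eq,
        Set.image_singleton, show v 3 = v3 from rfl, show v 2 = v2 from rfl,
        show v 1 = v1 from rfl, show v 0 = v0 from rfl, hs4]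
      exact Submodule.mem_top
  have hrepr : ∀ σ : G, ∀ i j : Fin 4, j < i →
      b.repr ((M σ).mulVec (v j)) i = 0 := by
    intro σ i j hij
    have h1 := hmem σ j
    rw [← hb] at h1
    have h2 := (Module.Basis.mem_span_image b).1 h1
    rw [← hb, ← Finsupp.notMem_support_iff]
    intro hi
    exact absurd (h2 (Finset.mem_coe.2 hi)) (by simpa using not_le.2 hij)
  set Bm : Matrix (Fin 4) (Fin 4) K := Matrix.of fun i j => v j i with hBmdef
  have hBmeq : Bm = (Pi.basisFun K (Fin 4)).toMatrix ⇑b := by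
    ext i j
    rw [Module.Basis.toMatrix_apply, Pi.basisFun_repr, hb]
    rfl
  have hBu : IsUnit Bm.det := by
    rw [hBmeq]
    have := (Pi.basisFun K (Fin 4)).invertibleToMatrix b
    exact (Matrix.isUnit_iff_isUnit_det _).1 (isUnit_of_invertible _)
  refine ⟨Bm, hBu, ?_⟩
  intro σ i j hij
  set T : Matrix (Fin 4) (Fin 4) K :=
    Matrix.of fun i j => b.repr ((M σ).mulVec (v j)) i with hTdef
  have hBT : Bm * T = M σ * Bm := by
    ext i' j'
    have hsum := b.sum_repr ((M σ).mulVec (v j'))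
    rw [hb] at hsum
    calc (Bm * T) i' j'
        = ∑ k, b.repr ((M σ).mulVec (v j')) k • v k i' := by
          simp [Matrix.mul_apply, hBmdef, hTdef, mul_comm, smul_eq_mul]
      _ = (∑ k, b.repr ((M σ).mulVec (v j')) k • v k) i' := by
          rw [Finset.sum_apply]; simp
      _ = (M σ).mulVec (v j') i' := by rw [hsum]
      _ = (M σ * Bm) i' j' := by
          simp [Matrix.mul_apply, Matrix.mulVec, dotProduct, hBmdef]
  have hfin : Bm⁻¹ * M σ * Bm = T := by
    rw [mul_assoc, ← hBT, ← mul_assoc, Matrix.nonsing_inv_mul Bm hBu, one_mul]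
  rw [hfin]
  exact hrepr σ i j hij


set_option maxRecDepth 8000 in
/-- Let `O` be a DVR with maximal ideal `m` and residue field `F = O/m`, and
`ρ : G → GL₄(O)` a homomorphism with reduction `ρ̄ : G → M₄(F)`.  If every
composition factor of the `F[G]`-module `F⁴` (via `ρ̄`) is one-dimensional
over `F` — i.e. for all `G`-stable subspaces `W < W'` with no `G`-stable
subspace strictly in between, `dim W' = dim W + 1` — then `ρ` can be
conjugated by some `P ∈ GL₄(O)` so that its reduction mod `m` is upper
triangular. -/
theorem conj_reduction_upper_triangular
    {O : Type*} [CommRing O] [IsDomain O] [IsDiscreteValuationRing O]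
    {G : Type*} [Group G] (ρ : G →* GL (Fin 4) O)
    (ρbar : G → Matrix (Fin 4) (Fin 4) (O ⧸ IsLocalRing.maximalIdeal O))
    (hρbar : ∀ σ : G, ρbar σ =
      ((ρ σ : Matrix (Fin 4) (Fin 4) O)).map
        (Ideal.Quotient.mk (IsLocalRing.maximalIdeal O)))
    (hcf : ∀ W W' : Submodule (O ⧸ IsLocalRing.maximalIdeal O)
        (Fin 4 → O ⧸ IsLocalRing.maximalIdeal O),
      (∀ σ : G, ∀ v ∈ W, (ρbar σ).mulVec v ∈ W) →
      (∀ σ : G, ∀ v ∈ W', (ρbar σ).mulVec v ∈ W') →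
      W < W' →
      (∀ X : Submodule (O ⧸ IsLocalRing.maximalIdeal O)
          (Fin 4 → O ⧸ IsLocalRing.maximalIdeal O),
        (∀ σ : G, ∀ v ∈ X, (ρbar σ).mulVec v ∈ X) → W ≤ X → X ≤ W' →
          X = W ∨ X = W') →
      Module.finrank (O ⧸ IsLocalRing.maximalIdeal O) W' =
        Module.finrank (O ⧸ IsLocalRing.maximalIdeal O) W + 1) :
    ∃ P : GL (Fin 4) O, ∀ σ : G, ∀ i j : Fin 4, j < i →
      Ideal.Quotient.mk (IsLocalRing.maximalIdeal O)
        (((P * ρ σ * P⁻¹ : GL (Fin 4) O) : Matrix (Fin 4) (Fin 4) O) i j) = 0 := by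
  classical
  letI : Field (O ⧸ IsLocalRing.maximalIdeal O) := Ideal.Quotient.field _
  obtain ⟨Bm, hBu, hconj⟩ := aux_upper_tri ρbar hcf
  have hsurj := Ideal.Quotient.mk_surjective (I := IsLocalRing.maximalIdeal O)
  choose lift hlift using hsurj
  set C0 : Matrix (Fin 4) (Fin 4) O := Matrix.of fun i j => lift (Bm⁻¹ i j) with hC0def
  have hC0map : C0.map (Ideal.Quotient.mk (IsLocalRing.maximalIdeal O)) = Bm⁻¹ := by
    ext i j
    simp [hC0def, Matrix.map_apply, hlift]
  have hC0det : IsUnit C0.det := by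
    by_contra hne
    have hmem' : C0.det ∈ IsLocalRing.maximalIdeal O :=
      (IsLocalRing.mem_maximalIdeal _).2 (mem_nonunits_iff.2 hne)
    have h0 : Ideal.Quotient.mk (IsLocalRing.maximalIdeal O) C0.det = 0 :=
      Ideal.Quotient.eq_zero_iff_mem.2 hmem'
    rw [RingHom.map_det, RingHom.mapMatrix_apply, hC0map] at h0
    exact (Matrix.isUnit_nonsing_inv_det Bm hBu).ne_zero h0
  obtain ⟨P, hP⟩ := (Matrix.isUnit_iff_isUnit_det C0).2 hC0det
  refine ⟨P, ?_⟩
  intro σ i j hij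
  set f : Matrix (Fin 4) (Fin 4) O →+* Matrix (Fin 4) (Fin 4) (O ⧸ IsLocalRing.maximalIdeal O) :=
    (Ideal.Quotient.mk (IsLocalRing.maximalIdeal O)).mapMatrix with hfdef
  have hfP : f (↑P) = Bm⁻¹ := by rw [hP]; exact hC0map
  have hfPinv : f (↑P⁻¹) = Bm := by
    have h1 : f (↑P) * f (↑P⁻¹) = 1 := by
      rw [← _root_.map_mul, ← Units.val_mul, mul_inv_cancel, Units.val_one, _root_.map_one]
    rw [hfP] at h1
    calc f (↑P⁻¹) = (Bm * Bm⁻¹) * f (↑P⁻¹) := by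
          rw [Matrix.mul_nonsing_inv Bm hBu, one_mul]
      _ = Bm * (Bm⁻¹ * f (↑P⁻¹)) := by rw [mul_assoc]
      _ = Bm := by rw [h1, mul_one]
  have hgoal : f (↑(P * ρ σ * P⁻¹)) = Bm⁻¹ * ρbar σ * Bm := by
    rw [Units.val_mul, Units.val_mul, _root_.map_mul, _root_.map_mul, hfP, hfPinv, hρbar σ]
    rfl
  have h2 := hconj σ i j hij
  rw [← hgoal] at h2
  exact h2
end

section
/- Let O be a discrete valuation ring with uniformizer ϖ and fraction field K, let G be a group, and let ρ : G → GL_4(O) be a group homomorphism such that the induced 4-dimensional representation of G on K^4 is irreducible (has no K-subspace invariant under all ρ(σ) other than 0 and K^4). Write each ρ(σ) in 2×2 blocks ρ(σ) = [[A(σ), B(σ)], [C(σ), D(σ)]] with A,B,C,D ∈ M_2(O), and assume that every entry of C(σ) lies in the ideal (ϖ) for all σ ∈ G. Then there exists an integer m ≥ 0 such that, setting Q = diag(ϖ^m, ϖ^m, 1, 1) ∈ GL_4(K), the conjugate ρ'(σ) := Q^{-1} ρ(σ) Q has all entries in O for every σ ∈ G, every entry of the lower-left 2×2 block of ρ'(σ)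 lies in (ϖ) for every σ ∈ G, and there exists σ₀ ∈ G such that some entry of the upper-right 2×2 block of ρ'(σ₀) is a unit of O. -/
open Matrix

/-- Ribet's lattice-conjugation lemma in the `(2,2)`-block case (Theorem
5.1(1)(a) of the paper).  Let `O` be a DVR with uniformizer `ϖ` and fraction
field `K`, and `ρ : G → GL₄(O)` irreducible over `K`, whose lower-left `2×2`
block has all entries in `(ϖ)`.  Then for some `m ≥ 0`, conjugating by
`Q = diag(ϖ^m, ϖ^m, 1, 1)` yields an `O`-integral representation whose
lower-left `2×2` block still has entries in `(ϖ)` and whose upper-right `2×2`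
block has some entry a unit of `O` for some `σ₀`. -/
theorem ribet_lattice_two_two
    {O K : Type*} [CommRing O] [IsDomain O] [IsDiscreteValuationRing O]
    [Field K] [Algebra O K] [IsFractionRing O K]
    {G : Type*} [Group G] (ϖ : O) (hϖ : Irreducible ϖ)
    (ρ : G →* GL (Fin 4) O)
    (hirr : ∀ W : Submodule K (Fin 4 → K),
      (∀ σ : G, ∀ v ∈ W,
        (((ρ σ : Matrix (Fin 4) (Fin 4) O)).map (algebraMap O K)).mulVec v ∈ W) →
      W = ⊥ ∨ W = ⊤)
    (hC : ∀ σ : G, ∀ i j : Fin 4, 2 ≤ (i : ℕ) → (j : ℕ) < 2 →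
      (ρ σ : Matrix (Fin 4) (Fin 4) O) i j ∈ Ideal.span {ϖ}) :
    ∃ m : ℕ,
      ∀ ρ' : G → Matrix (Fin 4) (Fin 4) K,
        (∀ σ : G, ρ' σ =
          (Matrix.diagonal (fun i : Fin 4 =>
              if (i : ℕ) < 2 then (algebraMap O K ϖ) ^ m else 1))⁻¹ *
            ((ρ σ : Matrix (Fin 4) (Fin 4) O)).map (algebraMap O K) *
            Matrix.diagonal (fun i : Fin 4 =>
              if (i : ℕ) < 2 then (algebraMap O K ϖ) ^ m else 1)) →
        (∀ σ : G, ∀ i j : Fin 4, ∃ x : O, algebraMap O K x = ρ' σ i j) ∧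
        (∀ σ : G, ∀ i j : Fin 4, 2 ≤ (i : ℕ) → (j : ℕ) < 2 →
          ∃ x ∈ Ideal.span {ϖ}, algebraMap O K x = ρ' σ i j) ∧
        (∃ σ₀ : G, ∃ i j : Fin 4, (i : ℕ) < 2 ∧ 2 ≤ (j : ℕ) ∧
          ∃ u : O, IsUnit u ∧ algebraMap O K u = ρ' σ₀ i j) := by
  classical
  have hinj := IsFractionRing.injective O K
  have hϖ0 : ϖ ≠ 0 := hϖ.ne_zero
  have hπ0 : algebraMap O K ϖ ≠ 0 := by
    intro h
    exact hϖ0 (hinj (by simpa using h))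
  -- Step 1: some upper-right entry is nonzero
  have hBne : ∃ σ : G, ∃ i j : Fin 4, (i : ℕ) < 2 ∧ 2 ≤ (j : ℕ) ∧
      (ρ σ : Matrix (Fin 4) (Fin 4) O) i j ≠ 0 := by
    by_contra hcon
    push_neg at hcon
    set W : Submodule K (Fin 4 → K) :=
      { carrier := {v | v 0 = 0 ∧ v 1 = 0}
        add_mem' := by
          rintro a b ⟨ha0, ha1⟩ ⟨hb0, hb1⟩
          exact ⟨by simp [ha0, hb0], by simp [ha1, hb1]⟩
        zero_mem' := ⟨rfl, rfl⟩
        smul_mem' := by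
          rintro c a ⟨ha0, ha1⟩
          exact ⟨by simp [ha0], by simp [ha1]⟩ } with hW
    have hWinv : ∀ σ : G, ∀ v ∈ W,
        (((ρ σ : Matrix (Fin 4) (Fin 4) O)).map (algebraMap O K)).mulVec v ∈ W := by
      intro σ v hv
      obtain ⟨hv0, hv1⟩ := hv
      have h02 : (ρ σ : Matrix (Fin 4) (Fin 4) O) 0 2 = 0 := hcon σ 0 2 (by decide) (by decide)
      have h03 : (ρ σ : Matrix (Fin 4) (Fin 4) O) 0 3 = 0 := hcon σ 0 3 (by decide) (by decide)
      have h12 : (ρ σ : Matrix (Fin 4) (Fin 4) O) 1 2 = 0 := hcon σ 1 2 (by decide) (by decide)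
      have h13 : (ρ σ : Matrix (Fin 4) (Fin 4) O) 1 3 = 0 := hcon σ 1 3 (by decide) (by decide)
      constructor <;>
        simp [Matrix.mulVec, dotProduct, Fin.sum_univ_four, Matrix.map_apply,
          hv0, hv1, h02, h03, h12, h13]
    rcases hirr W hWinv with hbot | htop
    · have hmem : (Pi.single (2 : Fin 4) (1 : K)) ∈ W := by
        constructor <;> simp [Pi.single_apply]
      rw [hbot] at hmem
      simp only [Submodule.mem_bot] at hmem
      have := congrFun hmem 2
      simp [Pi.single_apply] at this
    · have hmem : (Pi.single (0 : Fin 4) (1 : K)) ∈ W := htop ▸ Submodule.mem_top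
      have := hmem.1
      simp [Pi.single_apply] at this
  -- Step 2: define m
  set S : Set ℕ := {n : ℕ | ∃ σ : G, ∃ i j : Fin 4, (i : ℕ) < 2 ∧ 2 ≤ (j : ℕ) ∧
      ∃ u : Oˣ, (ρ σ : Matrix (Fin 4) (Fin 4) O) i j = ↑u * ϖ ^ n} with hS
  have hSne : S.Nonempty := by
    obtain ⟨σ, i, j, hi, hj, hne⟩ := hBne
    obtain ⟨n, u, hu⟩ := IsDiscreteValuationRing.eq_unit_mul_pow_irreducible hne hϖ
    exact ⟨n, σ, i, j, hi, hj, u, hu⟩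
  set m := sInf S with hm
  have hmem := Nat.sInf_mem hSne
  -- divisibility of all upper-right entries by ϖ^m
  have hdvd : ∀ σ : G, ∀ i j : Fin 4, (i : ℕ) < 2 → 2 ≤ (j : ℕ) →
      ∃ x : O, (ρ σ : Matrix (Fin 4) (Fin 4) O) i j = ϖ ^ m * x := by
    intro σ i j hi hj
    by_cases hz : (ρ σ : Matrix (Fin 4) (Fin 4) O) i j = 0
    · exact ⟨0, by simp [hz]⟩
    · obtain ⟨n, u, hu⟩ := IsDiscreteValuationRing.eq_unit_mul_pow_irreducible hz hϖ
      have hnS : n ∈ S := ⟨σ, i, j, hi, hj, u, hu⟩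
      have hmn : m ≤ n := Nat.sInf_le hnS
      have heq : ϖ ^ m * (↑u * ϖ ^ (n - m)) = ↑u * ϖ ^ n := by
        rw [mul_left_comm, ← pow_add, Nat.add_sub_cancel' hmn]
      exact ⟨↑u * ϖ ^ (n - m), by rw [hu, ← heq]⟩
  refine ⟨m, fun ρ' hρ' => ?_⟩
  -- entry formula
  have hinv : (Matrix.diagonal (fun i : Fin 4 =>
      if (i : ℕ) < 2 then (algebraMap O K ϖ) ^ m else 1))⁻¹ =
      Matrix.diagonal (fun i : Fin 4 =>
      (if (i : ℕ) < 2 then (algebraMap O K ϖ) ^ m else 1)⁻¹) := by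
    apply Matrix.inv_eq_right_inv
    rw [Matrix.diagonal_mul_diagonal]
    have : (fun i : Fin 4 => (if (i : ℕ) < 2 then (algebraMap O K ϖ) ^ m else 1) *
        (if (i : ℕ) < 2 then (algebraMap O K ϖ) ^ m else 1)⁻¹) = fun _ => (1 : K) := by
      funext i
      split <;> simp [mul_inv_cancel₀, pow_ne_zero, hπ0]
    rw [this, Matrix.diagonal_one]
  have key : ∀ σ : G, ∀ i j : Fin 4, ρ' σ i j =
      (if (i : ℕ) < 2 then (algebraMap O K ϖ) ^ m else 1)⁻¹ *
        algebraMap O K ((ρ σ : Matrix (Fin 4) (Fin 4) O) i j) *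
        (if (j : ℕ) < 2 then (algebraMap O K ϖ) ^ m else 1) := by
    intro σ i j
    rw [hρ' σ, hinv, Matrix.mul_diagonal, Matrix.diagonal_mul, Matrix.map_apply]
  have hπm : (algebraMap O K ϖ) ^ m ≠ 0 := pow_ne_zero _ hπ0
  -- main entry computation, by cases
  have main : ∀ σ : G, ∀ i j : Fin 4,
      (((i : ℕ) < 2 ∧ (j : ℕ) < 2) → ρ' σ i j =
        algebraMap O K ((ρ σ : Matrix (Fin 4) (Fin 4) O) i j)) := by
    intro σ i j ⟨hi, hj⟩
    rw [key σ i j, if_pos hi, if_pos hj]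
    field_simp
  refine ⟨?_, ?_, ?_⟩
  · -- integrality
    intro σ i j
    by_cases hi : (i : ℕ) < 2 <;> by_cases hj : (j : ℕ) < 2
    · exact ⟨_, (main σ i j ⟨hi, hj⟩).symm⟩
    · -- i < 2, j ≥ 2 : upper-right
      obtain ⟨x, hx⟩ := hdvd σ i j hi (by omega)
      refine ⟨x, ?_⟩
      rw [key σ i j, if_pos hi, if_neg hj, hx, _root_.map_mul, _root_.map_pow, mul_one,
        ← mul_assoc, inv_mul_cancel₀ hπm, one_mul]
    · -- i ≥ 2, j < 2
      refine ⟨(ρ σ : Matrix (Fin 4) (Fin 4) O) i j * ϖ ^ m, ?_⟩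
      rw [key σ i j, if_neg hi, if_pos hj, _root_.map_mul, _root_.map_pow, inv_one, one_mul]
    · refine ⟨(ρ σ : Matrix (Fin 4) (Fin 4) O) i j, ?_⟩
      rw [key σ i j, if_neg hi, if_neg hj, inv_one, one_mul, mul_one]
  · -- lower-left in (ϖ)
    intro σ i j hi hj
    refine ⟨(ρ σ : Matrix (Fin 4) (Fin 4) O) i j * ϖ ^ m,
      Ideal.mul_mem_right _ _ (hC σ i j hi hj), ?_⟩
    rw [key σ i j, if_neg (by omega : ¬ (i : ℕ) < 2), if_pos hj, _root_.map_mul, _root_.map_pow,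
      inv_one, one_mul]
  · -- unit entry
    obtain ⟨σ₀, i, j, hi, hj, u, hu⟩ := hmem
    refine ⟨σ₀, i, j, hi, hj, ↑u, u.isUnit, ?_⟩
    rw [key σ₀ i j, if_pos hi, if_neg (by omega : ¬ (j : ℕ) < 2), hu, _root_.map_mul, _root_.map_pow,
      mul_one, mul_comm ((algebraMap O K) ↑u), ← mul_assoc, inv_mul_cancel₀ hπm, one_mul]
end

section
/- Let O be a discrete valuation ring with uniformizer ϖ and fraction field K, let G be a group, and let ρ : G → GL_4(O) be a group homomorphism such that the induced 4-dimensional representation of G on K^4 is irreducible (has no K-subspace invariant under all ρ(σ) other than 0 and K^4). Write each ρ(σ) in blocks ρ(σ) = [[a(σ), b(σ)], [c(σ), D(σ)]] where a(σ) ∈ O is the (1,1) entry, b(σ) is the 1×3 row formed by the remaining entries of the first row, c(σ) is the 3×1 column formed by the remaining entries of the first column, and D(σ) ∈ M_3(O); assume that every entry of c(σ) lies in the ideal (ϖ) for all σ ∈ G. Then there exists an integer m ≥ 0 such that, setting Q₁ = diag(ϖ^m, 1, 1, 1) ∈ GL_4(K), the conjugate ρ'(σ) := Q₁^{-1} ρ(σ)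 Q₁ has all entries in O for every σ ∈ G, every entry of its lower-left 3×1 block lies in (ϖ) for every σ ∈ G, and there exists σ₀ ∈ G such that some entry of the upper-right 1×3 block of ρ'(σ₀) is a unit of O. -/
open Matrix

/-- Ribet's lattice-conjugation lemma in the `(1,3)`-block case (Theorem
5.1(1)(b) of the paper).  Let `O` be a DVR with uniformizer `ϖ` and fraction
field `K`, and `ρ : G → GL₄(O)` irreducible over `K`, whose lower-left `3×1`
block (entries `(i,0)` with `i ≥ 1`) has all entries in `(ϖ)`.  Then for some
`m ≥ 0`, conjugating by `Q₁ = diag(ϖ^m, 1, 1, 1)` yields an `O`-integral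
representation whose lower-left `3×1` block still has entries in `(ϖ)` and
whose upper-right `1×3` block has some entry a unit of `O` for some `σ₀`. -/
theorem ribet_lattice_one_three
    {O K : Type*} [CommRing O] [IsDomain O] [IsDiscreteValuationRing O]
    [Field K] [Algebra O K] [IsFractionRing O K]
    {G : Type*} [Group G] (ϖ : O) (hϖ : Irreducible ϖ)
    (ρ : G →* GL (Fin 4) O)
    (hirr : ∀ W : Submodule K (Fin 4 → K),
      (∀ σ : G, ∀ v ∈ W,
        (((ρ σ : Matrix (Fin 4) (Fin 4) O)).map (algebraMap O K)).mulVec v ∈ W) →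
      W = ⊥ ∨ W = ⊤)
    (hC : ∀ σ : G, ∀ i j : Fin 4, 1 ≤ (i : ℕ) → (j : ℕ) = 0 →
      (ρ σ : Matrix (Fin 4) (Fin 4) O) i j ∈ Ideal.span {ϖ}) :
    ∃ m : ℕ,
      ∀ ρ' : G → Matrix (Fin 4) (Fin 4) K,
        (∀ σ : G, ρ' σ =
          (Matrix.diagonal (fun i : Fin 4 =>
              if (i : ℕ) = 0 then (algebraMap O K ϖ) ^ m else 1))⁻¹ *
            ((ρ σ : Matrix (Fin 4) (Fin 4) O)).map (algebraMap O K) *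
            Matrix.diagonal (fun i : Fin 4 =>
              if (i : ℕ) = 0 then (algebraMap O K ϖ) ^ m else 1)) →
        (∀ σ : G, ∀ i j : Fin 4, ∃ x : O, algebraMap O K x = ρ' σ i j) ∧
        (∀ σ : G, ∀ i j : Fin 4, 1 ≤ (i : ℕ) → (j : ℕ) = 0 →
          ∃ x ∈ Ideal.span {ϖ}, algebraMap O K x = ρ' σ i j) ∧
        (∃ σ₀ : G, ∃ i j : Fin 4, (i : ℕ) = 0 ∧ 1 ≤ (j : ℕ) ∧
          ∃ u : O, IsUnit u ∧ algebraMap O K u = ρ' σ₀ i j) := by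
  classical
  have hinj : Function.Injective (algebraMap O K) := IsFractionRing.injective O K
  have hϖ0 : ϖ ≠ 0 := hϖ.ne_zero
  have hπ0 : algebraMap O K ϖ ≠ 0 := by
    intro h
    exact hϖ0 (hinj (by simpa using h))
  -- the set of valuations of nonzero upper-right entries is nonempty
  have hS : ∃ n : ℕ, ∃ σ : G, ∃ j : Fin 4, 1 ≤ (j : ℕ) ∧
      ∃ u : Oˣ, (ρ σ : Matrix (Fin 4) (Fin 4) O) 0 j = (u : O) * ϖ ^ n := by
    by_contra h
    push_neg at h
    have hb : ∀ σ : G, ∀ j : Fin 4, 1 ≤ (j : ℕ) →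
        (ρ σ : Matrix (Fin 4) (Fin 4) O) 0 j = 0 := by
      intro σ j hj
      by_contra hne
      obtain ⟨n, u, hu⟩ := IsDiscreteValuationRing.eq_unit_mul_pow_irreducible hne hϖ
      exact h n σ j hj u hu
    set W : Submodule K (Fin 4 → K) :=
      LinearMap.ker (LinearMap.proj (R := K) (φ := fun _ : Fin 4 => K) 0) with hW
    have hWinv : ∀ σ : G, ∀ v ∈ W,
        (((ρ σ : Matrix (Fin 4) (Fin 4) O)).map (algebraMap O K)).mulVec v ∈ W := by
      intro σ v hv
      have hv0 : v 0 = 0 := hv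
      have h1 : (ρ σ : Matrix (Fin 4) (Fin 4) O) 0 1 = 0 := hb σ 1 (by decide)
      have h2 : (ρ σ : Matrix (Fin 4) (Fin 4) O) 0 2 = 0 := hb σ 2 (by decide)
      have h3 : (ρ σ : Matrix (Fin 4) (Fin 4) O) 0 3 = 0 := hb σ 3 (by decide)
      show (((ρ σ : Matrix (Fin 4) (Fin 4) O)).map (algebraMap O K)).mulVec v 0 = 0
      simp [Matrix.mulVec, dotProduct, Fin.sum_univ_four, Matrix.map_apply,
        h1, h2, h3, hv0]
    rcases hirr W hWinv with h1 | h1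
    · have : (fun j : Fin 4 => if j = 1 then (1 : K) else 0) ∈ W := by
        show (fun j : Fin 4 => if j = 1 then (1 : K) else 0) 0 = 0
        norm_num
      rw [h1] at this
      simp only [Submodule.mem_bot] at this
      have := congrFun this 1
      norm_num at this
    · have : (fun j : Fin 4 => if j = 0 then (1 : K) else 0) ∈ W := h1 ▸ Submodule.mem_top
      have : (fun j : Fin 4 => if j = 0 then (1 : K) else 0) 0 = 0 := this
      norm_num at this
  set m := Nat.find hS with hm
  refine ⟨m, fun ρ' hρ' => ?_⟩
  have π0 : (algebraMap O K ϖ) ^ m ≠ 0 := pow_ne_zero _ hπ0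
  -- entrywise formula
  have hentry : ∀ σ : G, ∀ i j : Fin 4, ρ' σ i j =
      (if (i : ℕ) = 0 then ((algebraMap O K ϖ) ^ m)⁻¹ else 1) *
        algebraMap O K ((ρ σ : Matrix (Fin 4) (Fin 4) O) i j) *
        (if (j : ℕ) = 0 then (algebraMap O K ϖ) ^ m else 1) := by
    intro σ i j
    have hinv : (Matrix.diagonal (fun i : Fin 4 =>
        if (i : ℕ) = 0 then (algebraMap O K ϖ) ^ m else 1))⁻¹ =
        Matrix.diagonal (fun i : Fin 4 =>
        if (i : ℕ) = 0 then ((algebraMap O K ϖ) ^ m)⁻¹ else 1) := by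
      apply Matrix.inv_eq_right_inv
      rw [Matrix.diagonal_mul_diagonal]
      have h1 : (fun i : Fin 4 =>
          (if (i : ℕ) = 0 then (algebraMap O K ϖ) ^ m else 1) *
          if (i : ℕ) = 0 then ((algebraMap O K ϖ) ^ m)⁻¹ else 1) =
          fun _ : Fin 4 => (1 : K) := by
        funext i
        by_cases hi : (i : ℕ) = 0 <;> simp [hi, mul_inv_cancel₀ π0]
      rw [h1, Matrix.diagonal_one]
    rw [hρ' σ, hinv, Matrix.mul_diagonal, Matrix.diagonal_mul, Matrix.map_apply]
  -- divisibility of the top-row entries by ϖ^m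
  have hdvd : ∀ σ : G, ∀ j : Fin 4, 1 ≤ (j : ℕ) →
      ϖ ^ m ∣ (ρ σ : Matrix (Fin 4) (Fin 4) O) 0 j := by
    intro σ j hj
    by_cases hz : (ρ σ : Matrix (Fin 4) (Fin 4) O) 0 j = 0
    · simp [hz]
    obtain ⟨n, u, hu⟩ := IsDiscreteValuationRing.eq_unit_mul_pow_irreducible hz hϖ
    have hmn : m ≤ n := Nat.find_min' hS ⟨σ, j, hj, u, hu⟩
    exact hu ▸ Dvd.dvd.mul_left (pow_dvd_pow ϖ hmn) _
  refine ⟨?_, ?_, ?_⟩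
  · -- integrality
    intro σ i j
    rw [hentry σ i j]
    by_cases hi : (i : ℕ) = 0
    · by_cases hj : (j : ℕ) = 0
      · refine ⟨(ρ σ : Matrix (Fin 4) (Fin 4) O) i j, ?_⟩
        rw [if_pos hi, if_pos hj]
        field_simp
      · have hi0 : i = 0 := Fin.ext hi
        obtain ⟨x, hx⟩ := hdvd σ j (by omega)
        refine ⟨x, ?_⟩
        rw [if_pos hi, if_neg hj, hi0, hx, mul_one, _root_.map_mul, map_pow,
          inv_mul_cancel_left₀ π0]
    · refine ⟨(ρ σ : Matrix (Fin 4) (Fin 4) O) i j *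
        (if (j : ℕ) = 0 then ϖ ^ m else 1), ?_⟩
      rw [if_neg hi, one_mul]
      by_cases hj : (j : ℕ) = 0 <;> simp [hj, _root_.map_mul, map_pow]
  · -- lower-left block stays in (ϖ)
    intro σ i j hi hj
    refine ⟨(ρ σ : Matrix (Fin 4) (Fin 4) O) i j * ϖ ^ m,
      Ideal.mul_mem_right _ _ (hC σ i j hi hj), ?_⟩
    rw [hentry σ i j, if_neg (by omega : ¬ (i : ℕ) = 0), if_pos hj, one_mul,
      _root_.map_mul, map_pow]
  · -- a unit appears in the top row
    obtain ⟨σ₀, j, hj, u, hu⟩ := Nat.find_spec hS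
    refine ⟨σ₀, 0, j, rfl, hj, (u : O), u.isUnit, ?_⟩
    rw [hentry σ₀ 0 j, hu, if_neg (by omega : ¬ (j : ℕ) = 0), mul_one,
      _root_.map_mul, map_pow]
    norm_num
    rw [mul_comm ((algebraMap O K) (u : O)), inv_mul_cancel_left₀ π0]
end
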